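/- Let G be a simple graph with complement Ḡ having adjacency matrix Ā, and let G ∨ w be the graph obtained from G by adding a new vertex w adjacent to every vertex of G. Then G ∨ w is controllable if and only if G is controllable and det(Ā) ≠ 0 (i.e., Ḡ is not singular). -/

import Mathlib

open Matrix

open scoped Classical in
/-- The 0/1 adjacency matrix of a simple graph, over the integers. -/
noncomputable def adjMat {V : Type*} [Fintype V] (G : SimpleGraph V) : Matrix V V ℤ :=
  Matrix.of fun u v => if G.Adj u v then (1 : ℤ) else 0

/-- The walk matrix of a simple graph on `Fin n`: its `j`-th column is ``A^j e``
where `e` is the all-ones vector. -/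
noncomputable def walkMat {n : ℕ} (G : SimpleGraph (Fin n)) : Matrix (Fin n) (Fin n) ℤ :=
  Matrix.of fun i j => ((adjMat G ^ (j : ℕ)) *ᵥ fun _ => (1 : ℤ)) i

/-- `G ∪ w`: adjoin a new vertex (labelled `0`) adjacent to no vertex of `G`;
the original vertex `i` of `G` becomes `i.succ`. -/
def unionVertex {n : ℕ} (G : SimpleGraph (Fin n)) : SimpleGraph (Fin (n + 1)) where
  Adj u v := ∃ i j : Fin n, u = i.succ ∧ v = j.succ ∧ G.Adj i j
  symm := by
    constructor
    rintro u v ⟨i, j, hu, hv, h⟩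
    exact ⟨j, i, hv, hu, h.symm⟩
  loopless := by
    constructor
    rintro u ⟨i, j, rfl, hv, h⟩
    obtain rfl : i = j := Fin.succ_inj.mp hv
    exact G.loopless.irrefl i h

/-- `G ∨ w`: adjoin a new vertex (labelled `0`) adjacent to every vertex of `G`;
the original vertex `i` of `G` becomes `i.succ`. -/
def joinVertex {n : ℕ} (G : SimpleGraph (Fin n)) : SimpleGraph (Fin (n + 1)) where
  Adj u v := (u = 0 ∧ v ≠ 0) ∨ (v = 0 ∧ u ≠ 0) ∨
    ∃ i j : Fin n, u = i.succ ∧ v = j.succ ∧ G.Adj i j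
  symm := by
    constructor
    rintro u v (⟨h1, h2⟩ | ⟨h1, h2⟩ | ⟨i, j, hu, hv, h⟩)
    · exact Or.inr (Or.inl ⟨h1, h2⟩)
    · exact Or.inl ⟨h1, h2⟩
    · exact Or.inr (Or.inr ⟨j, i, hv, hu, h.symm⟩)
  loopless := by
    constructor
    rintro u (⟨h1, h2⟩ | ⟨h1, h2⟩ | ⟨i, j, rfl, hv, h⟩)
    · exact h2 h1
    · exact h2 h1
    · obtain rfl : i = j := Fin.succ_inj.mp hv
      exact G.loopless.irrefl i h

/-- The sequence `G₀, G₁, G₂, …` where `Gᵢ = G_{i-1} ∪ wᵢ` for odd `i` and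
`Gᵢ = G_{i-1} ∨ wᵢ` for even `i ≥ 2`. -/
def seqGraph {n0 : ℕ} (G0 : SimpleGraph (Fin n0)) : (i : ℕ) → SimpleGraph (Fin (n0 + i))
  | 0 => G0
  | (i + 1) => if (i + 1) % 2 = 1 then unionVertex (seqGraph G0 i) else joinVertex (seqGraph G0 i)

/-- A graph is determined by its generalized spectrum. -/
def IsDGS {n : ℕ} (G : SimpleGraph (Fin n)) : Prop :=
  ∀ H : SimpleGraph (Fin n),
    (adjMat H).charpoly = (adjMat G).charpoly →
    (adjMat Hᶜ).charpoly = (adjMat Gᶜ).charpoly →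
    Nonempty (H ≃g G)

/-! Since `Ā = J - I - A` and `J v` is always a multiple of `e`, the column `Ā^j e` is
`(-1)^j A^j e` plus a combination of the earlier columns `A^i e`, `i < j`. Hence
`W(Ḡ) = W(G) U` with `U` upper triangular with diagonal entries `±1`, so controllability is
invariant under complementation. The complement of `G ∨ w` is `Ḡ ∪ w` (a new isolated vertex),
whose walk matrix has first row `(1, 0, …, 0)` and complementary minor `A(Ḡ) W(Ḡ)`; thus
`det W(Ḡ ∪ w) = det A(Ḡ) · det W(Ḡ)`. -/

open Polynomial

section AllOnesSubOneSub

variable {V R : Type*} [Fintype V] [DecidableEq V] [CommRing R]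

lemma allOnes_sub_one_sub_mulVec (A : Matrix V V R) (v : V → R) :
    (of (fun _ _ => 1) - 1 - A) *ᵥ v = (∑ k, v k) • (fun _ => 1) - v - A *ᵥ v := by
  rw [sub_mulVec, sub_mulVec, one_mulVec]
  congr 2
  ext u
  simp [mulVec, dotProduct]

lemma exists_allOnes_sub_one_sub_pow_mulVec_one_eq_aeval (A : Matrix V V R) (j : ℕ) :
    ∃ p : R[X], p.natDegree ≤ j ∧ p.coeff j = (-1) ^ j ∧
      (of (fun _ _ => 1) - 1 - A) ^ j *ᵥ (fun _ => 1) = aeval A p *ᵥ (fun _ => 1) := by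
  induction j with
  | zero => exact ⟨1, by simp, by simp, by simp⟩
  | succ j ih =>
    obtain ⟨p, hdeg, hcoeff, hp⟩ := ih
    set w := aeval A p *ᵥ (fun _ => (1 : R))
    refine ⟨C (∑ k, w k) - p - X * p, ?_, ?_, ?_⟩
    · have hXp : (X * p).natDegree ≤ j + 1 :=
        (natDegree_mul_le_of_le natDegree_X_le hdeg).trans (by omega)
      refine (natDegree_sub_le _ _).trans (max_le ((natDegree_sub_le _ _).trans ?_) hXp)
      simp only [natDegree_C]
      omega
    · have hnext : p.coeff (j + 1) = 0 := coeff_eq_zero_of_natDegree_lt (by omega)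
      simp [coeff_X_mul, hcoeff, hnext, pow_succ]
    · rw [pow_succ', ← mulVec_mulVec, hp, allOnes_sub_one_sub_mulVec, map_sub, map_sub, aeval_C,
        Algebra.algebraMap_eq_smul_one, map_mul, aeval_X, sub_mulVec, sub_mulVec, smul_mulVec,
        one_mulVec, mulVec_mulVec]

end AllOnesSubOneSub

open scoped Classical in
lemma adjMat_apply {V : Type*} [Fintype V] (G : SimpleGraph V) (u v : V) :
    adjMat G u v = if G.Adj u v then 1 else 0 := rfl

lemma walkMat_apply {n : ℕ} (G : SimpleGraph (Fin n)) (i j : Fin n) :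
    walkMat G i j = (adjMat G ^ (j : ℕ) *ᵥ fun _ => 1) i := rfl

lemma adjMat_compl {V : Type*} [Fintype V] [DecidableEq V] (G : SimpleGraph V) :
    adjMat Gᶜ = of (fun _ _ => 1) - 1 - adjMat G := by
  ext u v
  by_cases huv : u = v
  · subst huv
    simp [adjMat_apply]
  · by_cases h : G.Adj u v <;> simp [adjMat_apply, h, huv]

lemma walkMat_compl_eq_mul {m : ℕ} (G : SimpleGraph (Fin m)) :
    ∃ U : Matrix (Fin m) (Fin m) ℤ, U.IsUpperTriangular ∧ (∀ i, U i i = (-1) ^ (i : ℕ)) ∧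
      walkMat Gᶜ = walkMat G * U := by
  choose p hdeg hcoeff hp using exists_allOnes_sub_one_sub_pow_mulVec_one_eq_aeval (adjMat G)
  refine ⟨of fun i j => (p j).coeff i, fun i j hji => ?_, fun i => hcoeff i, ?_⟩
  · exact coeff_eq_zero_of_natDegree_lt ((hdeg j).trans_lt hji)
  ext v j
  rw [walkMat_apply, adjMat_compl, hp, aeval_eq_sum_range' ((hdeg j).trans_lt j.isLt),
    sum_mulVec, mul_apply, Finset.sum_apply, ← Fin.sum_univ_eq_sum_range]
  refine Finset.sum_congr rfl fun i _ => ?_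
  rw [smul_mulVec, Pi.smul_apply, smul_eq_mul, walkMat_apply, mul_comm, of_apply]

lemma det_walkMat_compl {m : ℕ} (G : SimpleGraph (Fin m)) :
    (walkMat Gᶜ).det = (-1) ^ m.choose 2 * (walkMat G).det := by
  obtain ⟨U, hU, hdiag, hW⟩ := walkMat_compl_eq_mul G
  rw [hW, det_mul, mul_comm, det_of_isUpperTriangular hU]
  simp only [hdiag]
  rw [Fin.prod_univ_eq_prod_range (fun i => (-1 : ℤ) ^ i), Finset.prod_pow_eq_pow_sum,
    Finset.sum_range_id, Nat.choose_two_right]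

lemma det_walkMat_compl_ne_zero_iff {m : ℕ} (G : SimpleGraph (Fin m)) :
    (walkMat Gᶜ).det ≠ 0 ↔ (walkMat G).det ≠ 0 := by
  simp [det_walkMat_compl]

section UnionVertex

variable {m : ℕ} (G : SimpleGraph (Fin m))

@[simp]
lemma adjMat_unionVertex_zero_left (v : Fin (m + 1)) : adjMat (unionVertex G) 0 v = 0 :=
  if_neg fun ⟨i, _, hi, _⟩ => Fin.succ_ne_zero i hi.symm

@[simp]
lemma adjMat_unionVertex_zero_right (v : Fin (m + 1)) : adjMat (unionVertex G) v 0 = 0 :=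
  if_neg fun ⟨_, j, _, hj, _⟩ => Fin.succ_ne_zero j hj.symm

@[simp]
lemma adjMat_unionVertex_succ_succ (i j : Fin m) :
    adjMat (unionVertex G) i.succ j.succ = adjMat G i j := by
  classical
  have hadj : (unionVertex G).Adj i.succ j.succ ↔ G.Adj i j :=
    ⟨fun ⟨_, _, hi, hj, h⟩ => Fin.succ_injective _ hi ▸ Fin.succ_injective _ hj ▸ h,
      fun h => ⟨i, j, rfl, rfl, h⟩⟩
  exact if_congr hadj rfl rfl

lemma adjMat_unionVertex_mulVec_cons (a : ℤ) (v : Fin m → ℤ) :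
    adjMat (unionVertex G) *ᵥ Fin.cons a v = Fin.cons 0 (adjMat G *ᵥ v) := by
  ext u
  refine Fin.cases ?_ (fun i => ?_) u <;>
    simp [mulVec, dotProduct, Fin.sum_univ_succ]

lemma adjMat_unionVertex_pow_mulVec_one (j : ℕ) :
    adjMat (unionVertex G) ^ j *ᵥ (fun _ => 1) =
      Fin.cons (if j = 0 then 1 else 0) (adjMat G ^ j *ᵥ fun _ => 1) := by
  induction j with
  | zero =>
    ext u
    refine Fin.cases ?_ (fun i => ?_) u <;> simp
  | succ j ih =>
    rw [pow_succ', ← mulVec_mulVec, ih, adjMat_unionVertex_mulVec_cons, pow_succ',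
      ← mulVec_mulVec, if_neg j.succ_ne_zero]

lemma det_walkMat_unionVertex :
    (walkMat (unionVertex G)).det = (adjMat G).det * (walkMat G).det := by
  have hrow : ∀ j : Fin (m + 1), walkMat (unionVertex G) 0 j = if j = 0 then 1 else 0 := by
    intro j
    rw [walkMat_apply, adjMat_unionVertex_pow_mulVec_one, Fin.cons_zero]
    simp only [Fin.val_eq_zero_iff]
  have hminor : (walkMat (unionVertex G)).submatrix Fin.succ Fin.succ = adjMat G * walkMat G := by
    ext i j
    rw [submatrix_apply, walkMat_apply, adjMat_unionVertex_pow_mulVec_one, Fin.cons_succ,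
      Fin.val_succ, pow_succ', ← mulVec_mulVec]
    simp only [mul_apply, mulVec, dotProduct, walkMat_apply]
  rw [det_succ_row_zero, Fin.sum_univ_succ]
  simp [hrow, hminor, det_mul]

end UnionVertex

lemma compl_joinVertex {n : ℕ} (G : SimpleGraph (Fin n)) :
    (joinVertex G)ᶜ = unionVertex Gᶜ := by
  ext u v
  refine Fin.cases ?_ (fun i => ?_) u <;> refine Fin.cases ?_ (fun j => ?_) v <;>
    simp [joinVertex, unionVertex, (Fin.succ_ne_zero _).symm]

/-- `G ∨ w` is controllable iff `G` is controllable and `Ḡ` is not singular. -/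
theorem joinVertex_controllable_iff {n : ℕ} (G : SimpleGraph (Fin n)) :
    (walkMat (joinVertex G)).det ≠ 0 ↔ (walkMat G).det ≠ 0 ∧ (adjMat Gᶜ).det ≠ 0 := by
  rw [← det_walkMat_compl_ne_zero_iff (joinVertex G), compl_joinVertex, det_walkMat_unionVertex,
    mul_ne_zero_iff, det_walkMat_compl_ne_zero_iff, and_comm]
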